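/- Let G' be the Type B Whitney flip of a simple graph G along (H, v1, v2), and let φ be the map sending each edge {x, y} of G with both endpoints in H to {τ(x), τ(y)} and fixing every other edge of G. Then φ is a bijection from the edge set of G onto the edge set of G', and a set C of edges of G is the edge set of a cycle of G if and only if φ(C) is the edge set of a cycle of G'. In particular, for every integer k, G has a cycle of length k if and only if G' has a cycle of length k. -/

import Mathlib

attribute [local instance] Classical.propDecidable

open SimpleGraph

/-- The vertex map of the Type B Whitney flip: `v1 ↦ v2`, all other vertices fixed. -/
def tauB {V : Type*} [DecidableEq V] (v1 v2 : V) (x : V) : V :=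
  if x = v1 then v2 else x

/-- The Type B Whitney flip of `G` along `(H, v1, v2)` (where `v2 ∉ H`): edges with both
endpoints in `H` are mapped by `tauB v1 v2`; all other edges are kept. -/
def typeBFlip {V : Type*} [DecidableEq V] (G : SimpleGraph V) (v1 v2 : V) (H : Set V)
    (hv2 : v2 ∉ H) : SimpleGraph V where
  Adj a b :=
    (∃ x y : V, x ∈ H ∧ y ∈ H ∧ G.Adj x y ∧ a = tauB v1 v2 x ∧ b = tauB v1 v2 y) ∨
    (¬(a ∈ H ∧ b ∈ H) ∧ G.Adj a b)
  symm := by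
    constructor
    rintro a b (⟨x, y, hx, hy, h, ha, hb⟩ | ⟨hn, h⟩)
    · exact Or.inl ⟨y, x, hy, hx, h.symm, hb, ha⟩
    · exact Or.inr ⟨fun ⟨hb', ha'⟩ => hn ⟨ha', hb'⟩, h.symm⟩
  loopless := by
    constructor
    rintro a (⟨x, y, hx, hy, h, ha, hb⟩ | ⟨_, h⟩)
    · have hxy : tauB v1 v2 x = tauB v1 v2 y := ha ▸ hb
      unfold tauB at hxy
      split_ifs at hxy with hx1 hy1 hy1
      · exact h.ne (hx1.trans hy1.symm)
      · exact hv2 (hxy ▸ hy)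
      · exact hv2 (hxy ▸ hx)
      · exact h.ne hxy
    · exact h.ne rfl


/-- The edge map of the Type B Whitney flip: an edge with both endpoints in `H` is
mapped by `tauB v1 v2`; every other edge is fixed. -/
noncomputable def phiB {V : Type*} [DecidableEq V] (v1 v2 : V) (H : Set V)
    (e : Sym2 V) : Sym2 V :=
  if ∀ x ∈ e, x ∈ H then e.map (tauB v1 v2) else e

/-! Every edge leaving `H` does so at `v1`, so all vertices of a cycle of `G` other than `v1` lie
on the same side of `H`: a cycle has either all of its edges inside `H` or none. In the first case
the transposition of `v1` and `v2`, which agrees with `tauB v1 v2` on `H`, carries it injectively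
onto a cycle of the flipped graph `G'`; in the second it is already a cycle of `G'`.
With `H' = insert v2 (H \ {v1})`, the graph `G'` satisfies the same hypothesis at `(H', v2)`, and
`phiB v2 v1 H'` inverts `phiB v1 v2 H` on the edge sets, so the same argument runs backwards. -/

theorem Set.mem_sym2_iff {α : Type*} {s : Set α} {z : Sym2 α} : z ∈ s.sym2 ↔ ∀ a ∈ z, a ∈ s := by
  induction z using Sym2.ind with
  | _ x y => simp

namespace SimpleGraph

variable {V W : Type*} {G : SimpleGraph V} {S : Set V} {v : V}

theorem mem_iff_mem_of_adj (hS : ∀ x y, G.Adj x y → x ∈ S \ {v} → y ∈ S) {x y : V}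
    (h : G.Adj x y) (hx : x ≠ v) (hy : y ≠ v) : x ∈ S ↔ y ∈ S :=
  ⟨fun hxS => hS x y h ⟨hxS, hx⟩, fun hyS => hS y x h.symm ⟨hyS, hy⟩⟩

theorem mk_mem_sym2_iff_of_adj (hS : ∀ x y, G.Adj x y → x ∈ S \ {v} → y ∈ S) {x y : V}
    (h : G.Adj x y) (hx : x ≠ v) : s(x, y) ∈ S.sym2 ↔ x ∈ S :=
  ⟨And.left, fun hxS => ⟨hxS, hS x y h ⟨hxS, hx⟩⟩⟩

namespace Walk

theorem mem_iff_mem_of_notMem_support (hS : ∀ x y, G.Adj x y → x ∈ S \ {v} → y ∈ S) :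
    ∀ {a b : V} (p : G.Walk a b), v ∉ p.support → (a ∈ S ↔ b ∈ S)
  | _, _, nil, _ => Iff.rfl
  | _, _, cons h p, hp => by
    rw [support_cons, List.mem_cons, not_or] at hp
    exact (mem_iff_mem_of_adj hS h (Ne.symm hp.1) (fun h => hp.2 (h ▸ p.start_mem_support))).trans
      (p.mem_iff_mem_of_notMem_support hS hp.2)

theorem mem_sym2_iff_of_notMem_support_tail (hS : ∀ x y, G.Adj x y → x ∈ S \ {v} → y ∈ S) :
    ∀ {a b : V} (p : G.Walk a b), v ∉ p.support.tail → ∀ e ∈ p.edges, (e ∈ S.sym2 ↔ b ∈ S)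
  | _, _, nil, _ => by simp
  | _, _, cons h p, hp => by
    rw [support_cons, List.tail_cons] at hp
    rw [edges_cons]
    rintro e (_ | ⟨_, he⟩)
    · rw [Sym2.eq_swap, mk_mem_sym2_iff_of_adj hS h.symm (fun h => hp (h ▸ p.start_mem_support))]
      exact p.mem_iff_mem_of_notMem_support hS hp
    · exact p.mem_sym2_iff_of_notMem_support_tail hS (fun h => hp (List.mem_of_mem_tail h)) e he

theorem IsCycle.exists_forall_mem_sym2_iff_of_base (hS : ∀ x y, G.Adj x y → x ∈ S \ {v} → y ∈ S)
    {c : G.Walk v v} (hc : c.IsCycle) : ∃ P : Prop, ∀ e ∈ c.edges, (e ∈ S.sym2 ↔ P) := by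
  cases c with
  | nil => exact absurd rfl hc.ne_nil
  | @cons _ w _ h q =>
    have hq : v ∉ q.reverse.support.tail := by
      have hnodup := ((cons_isCycle_iff q h).1 hc).1.reverse.support_nodup
      rw [← cons_tail_support, List.nodup_cons] at hnodup
      exact hnodup.1
    refine ⟨w ∈ S, ?_⟩
    rw [edges_cons]
    rintro e (_ | ⟨_, he⟩)
    · rw [Sym2.eq_swap]
      exact mk_mem_sym2_iff_of_adj hS h.symm h.ne.symm
    · exact q.reverse.mem_sym2_iff_of_notMem_support_tail hS hq e
        (by rwa [edges_reverse, List.mem_reverse])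

theorem IsCycle.exists_forall_mem_sym2_iff (hS : ∀ x y, G.Adj x y → x ∈ S \ {v} → y ∈ S)
    {u : V} {c : G.Walk u u} (hc : c.IsCycle) : ∃ P : Prop, ∀ e ∈ c.edges, (e ∈ S.sym2 ↔ P) := by
  by_cases hv : v ∈ c.support
  · obtain ⟨P, hP⟩ := (hc.rotate hv).exists_forall_mem_sym2_iff_of_base hS
    exact ⟨P, fun e he => hP e ((c.rotate_edges v hv).mem_iff.2 he)⟩
  · exact ⟨u ∈ S, c.mem_sym2_iff_of_notMem_support_tail hS (fun h => hv (List.mem_of_mem_tail h))⟩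

theorem IsCycle.exists_isCycle_edges_eq_map {G' : SimpleGraph W} {f : V → W}
    (hf : Function.Injective f) {u : V} {c : G.Walk u u} (hc : c.IsCycle)
    (h : ∀ e ∈ c.edges, e.map f ∈ G'.edgeSet) :
    ∃ c' : G'.Walk (f u) (f u), c'.IsCycle ∧ c'.edges = c.edges.map (Sym2.map f) := by
  let φ : G ⊓ G'.comap f →g G' := ⟨f, And.right⟩
  have hK : ∀ e ∈ c.edges, e ∈ (G ⊓ G'.comap f).edgeSet := by
    intro e he
    induction e using Sym2.ind with
    | _ x y => exact ⟨c.adj_of_mem_edges he, h _ he⟩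
  exact ⟨(c.transfer _ hK).map φ, (hc.transfer hK).map hf, by rw [edges_map, edges_transfer]; rfl⟩

end Walk

end SimpleGraph

section TypeBFlip

variable {V : Type*} {G : SimpleGraph V} {v1 v2 : V} {H : Set V}

theorem mk_notMem_sym2_insert_diff (hv2 : v2 ∉ H)
    (hHedge : ∀ x y : V, G.Adj x y → x ∈ H \ ({v1} : Set V) → y ∈ H) {x y : V} (h : G.Adj x y)
    (hxy : ¬(x ∈ H ∧ y ∈ H)) : s(x, y) ∉ (insert v2 (H \ {v1})).sym2 := by
  rw [Set.mk_mem_sym2_iff]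
  rintro ⟨hx | hx, hy | hy⟩
  · exact h.ne (hx.trans hy.symm)
  · exact hv2 (hx ▸ hHedge y x h.symm hy)
  · exact hv2 (hy ▸ hHedge x y h hx)
  · exact hxy ⟨hx.1, hy.1⟩

variable [DecidableEq V] {a b : V} {S : Set V}

theorem phiB_of_mem {e : Sym2 V} (he : e ∈ S.sym2) : phiB a b S e = e.map (tauB a b) :=
  if_pos (Set.mem_sym2_iff.1 he)

theorem phiB_of_notMem {e : Sym2 V} (he : e ∉ S.sym2) : phiB a b S e = e :=
  if_neg (mt Set.mem_sym2_iff.2 he)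

theorem tauB_eq_swap (hb : b ∉ S) {x : V} (hx : x ∈ S) : tauB a b x = Equiv.swap a b x := by
  rw [tauB, Equiv.swap_apply_def, if_neg (show x ≠ b by rintro rfl; exact hb hx)]

theorem phiB_eq_map_swap (hb : b ∉ S) {e : Sym2 V} (he : e ∈ S.sym2) :
    phiB a b S e = e.map (Equiv.swap a b) := by
  rw [phiB_of_mem he]
  induction e using Sym2.ind with
  | _ x y => simp only [Sym2.map_mk, tauB_eq_swap hb he.1, tauB_eq_swap hb he.2]

theorem SimpleGraph.Walk.IsCycle.exists_isCycle_edges_eq_map_phiB {G₁ G₂ : SimpleGraph V}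
    (hb : b ∉ S) (hS : ∀ x y, G₁.Adj x y → x ∈ S \ {a} → y ∈ S)
    (hmaps : Set.MapsTo (phiB a b S) G₁.edgeSet G₂.edgeSet) {u : V} {c : G₁.Walk u u}
    (hc : c.IsCycle) :
    ∃ w, ∃ c' : G₂.Walk w w, c'.IsCycle ∧ c'.edges = c.edges.map (phiB a b S) := by
  have of_eq_map : ∀ f : V → V, Function.Injective f → (∀ e ∈ c.edges, phiB a b S e = e.map f) →
      ∃ w, ∃ c' : G₂.Walk w w, c'.IsCycle ∧ c'.edges = c.edges.map (phiB a b S) := by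
    intro f hf hφ
    obtain ⟨c', hc', hedges⟩ := hc.exists_isCycle_edges_eq_map hf
      fun e he => hφ e he ▸ hmaps (c.edges_subset_edgeSet he)
    exact ⟨_, c', hc', hedges.trans (List.map_congr_left hφ).symm⟩
  obtain ⟨P, hP⟩ := hc.exists_forall_mem_sym2_iff hS
  by_cases hPt : P
  · exact of_eq_map _ (Equiv.swap a b).injective
      fun e he => phiB_eq_map_swap hb ((hP e he).2 hPt)
  · exact of_eq_map id Function.injective_id
      fun e he => (phiB_of_notMem (hPt ∘ (hP e he).1)).trans (congrFun Sym2.map_id e).symm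

theorem tauB_mem_insert_diff {x : V} (hx : x ∈ H) : tauB v1 v2 x ∈ insert v2 (H \ {v1}) := by
  unfold tauB
  split_ifs with h
  exacts [Set.mem_insert _ _, Set.mem_insert_of_mem _ ⟨hx, h⟩]

theorem tauB_tauB (hv2 : v2 ∉ H) {x : V} (hx : x ∈ H) : tauB v2 v1 (tauB v1 v2 x) = x := by
  by_cases h : x = v1
  · simp [tauB, h]
  · simp [tauB, h, ne_of_mem_of_not_mem hx hv2]

theorem phiB_inv_mk_tauB (hv2 : v2 ∉ H) {x y : V} (hx : x ∈ H) (hy : y ∈ H) :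
    phiB v2 v1 (insert v2 (H \ {v1})) s(tauB v1 v2 x, tauB v1 v2 y) = s(x, y) := by
  rw [phiB_of_mem (Set.mk_mem_sym2_iff.2 ⟨tauB_mem_insert_diff hx, tauB_mem_insert_diff hy⟩),
    Sym2.map_mk, tauB_tauB hv2 hx, tauB_tauB hv2 hy]

theorem phiB_mapsTo_typeBFlip (hv2 : v2 ∉ H) :
    Set.MapsTo (phiB v1 v2 H) G.edgeSet (typeBFlip G v1 v2 H hv2).edgeSet := by
  intro e he
  induction e using Sym2.ind with
  | _ x y =>
    by_cases hxy : x ∈ H ∧ y ∈ H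
    · rw [phiB_of_mem hxy, Sym2.map_mk]
      exact Or.inl ⟨x, y, hxy.1, hxy.2, he, rfl, rfl⟩
    · rw [phiB_of_notMem hxy]
      exact Or.inr ⟨hxy, he⟩

theorem phiB_mapsTo_of_typeBFlip (hv2 : v2 ∉ H)
    (hHedge : ∀ x y : V, G.Adj x y → x ∈ H \ ({v1} : Set V) → y ∈ H) :
    Set.MapsTo (phiB v2 v1 (insert v2 (H \ {v1}))) (typeBFlip G v1 v2 H hv2).edgeSet
      G.edgeSet := by
  intro e he
  induction e using Sym2.ind with
  | _ a b =>
    rcases he with ⟨x, y, hx, hy, h, rfl, rfl⟩ | ⟨hab, h⟩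
    · rwa [phiB_inv_mk_tauB hv2 hx hy]
    · rwa [phiB_of_notMem (mk_notMem_sym2_insert_diff hv2 hHedge h hab)]

theorem phiB_invOn_typeBFlip (hv2 : v2 ∉ H)
    (hHedge : ∀ x y : V, G.Adj x y → x ∈ H \ ({v1} : Set V) → y ∈ H) :
    Set.InvOn (phiB v2 v1 (insert v2 (H \ {v1}))) (phiB v1 v2 H) G.edgeSet
      (typeBFlip G v1 v2 H hv2).edgeSet := by
  constructor
  · intro e he
    induction e using Sym2.ind with
    | _ x y =>
      by_cases hxy : x ∈ H ∧ y ∈ H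
      · rw [phiB_of_mem (S := H) hxy, Sym2.map_mk, phiB_inv_mk_tauB hv2 hxy.1 hxy.2]
      · rw [phiB_of_notMem (S := H) hxy,
          phiB_of_notMem (mk_notMem_sym2_insert_diff hv2 hHedge he hxy)]
  · intro e he
    induction e using Sym2.ind with
    | _ a b =>
      rcases he with ⟨x, y, hx, hy, h, rfl, rfl⟩ | ⟨hab, h⟩
      · rw [phiB_inv_mk_tauB hv2 hx hy, phiB_of_mem (Set.mk_mem_sym2_iff.2 ⟨hx, hy⟩), Sym2.map_mk]
      · rw [phiB_of_notMem (mk_notMem_sym2_insert_diff hv2 hHedge h hab), phiB_of_notMem hab]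

theorem typeBFlip_adj_mem_insert_diff (hv2 : v2 ∉ H)
    (hHedge : ∀ x y : V, G.Adj x y → x ∈ H \ ({v1} : Set V) → y ∈ H) :
    ∀ x y, (typeBFlip G v1 v2 H hv2).Adj x y →
      x ∈ insert v2 (H \ {v1}) \ {v2} → y ∈ insert v2 (H \ {v1}) := by
  rintro x y (⟨x', y', -, hy', -, rfl, rfl⟩ | ⟨hxy, h⟩) ⟨hx, hx2⟩
  · exact tauB_mem_insert_diff hy'
  · have hx : x ∈ H \ {v1} := hx.resolve_left hx2
    exact absurd ⟨hx.1, hHedge x y h hx⟩ hxy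

end TypeBFlip

theorem phiB_edge_bijection_cycles_general {V : Type*} [DecidableEq V] (G : SimpleGraph V)
    (v1 v2 : V)
    (H : Set V) (h1 : v1 ∈ H) (hv2 : v2 ∉ H)
    (hHedge : ∀ x y : V, G.Adj x y → x ∈ H \ ({v1} : Set V) → y ∈ H) :
    Set.BijOn (phiB v1 v2 H) G.edgeSet (typeBFlip G v1 v2 H hv2).edgeSet ∧
      (∀ C : Set (Sym2 V), C ⊆ G.edgeSet →
        ((∃ u : V, ∃ c : G.Walk u u, c.IsCycle ∧ C = {f | f ∈ c.edges}) ↔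
          (∃ u : V, ∃ c : (typeBFlip G v1 v2 H hv2).Walk u u, c.IsCycle ∧
            phiB v1 v2 H '' C = {f | f ∈ c.edges}))) ∧
      (∀ k : ℕ, (∃ u : V, ∃ c : G.Walk u u, c.IsCycle ∧ c.length = k) ↔
        (∃ u : V, ∃ c : (typeBFlip G v1 v2 H hv2).Walk u u, c.IsCycle ∧ c.length = k)) := by
  have hv1 : v1 ∉ insert v2 (H \ {v1}) := by simp [ne_of_mem_of_not_mem h1 hv2]
  have hinv := phiB_invOn_typeBFlip hv2 hHedge
  have hfwd := phiB_mapsTo_typeBFlip (G := G) (v1 := v1) hv2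
  have hback := phiB_mapsTo_of_typeBFlip hv2 hHedge
  have fwd {u : V} {c : G.Walk u u} (hc : c.IsCycle) :=
    hc.exists_isCycle_edges_eq_map_phiB hv2 hHedge hfwd
  have bwd {w : V} {c' : (typeBFlip G v1 v2 H hv2).Walk w w} (hc' : c'.IsCycle) :=
    hc'.exists_isCycle_edges_eq_map_phiB hv1 (typeBFlip_adj_mem_insert_diff hv2 hHedge) hback
  have length_eq {G₁ G₂ : SimpleGraph V} {u w : V} {c : G₁.Walk u u} {c' : G₂.Walk w w}
      {g : Sym2 V → Sym2 V} (h : c'.edges = c.edges.map g) : c'.length = c.length := by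
    simpa using congrArg List.length h
  refine ⟨hinv.bijOn hfwd hback, fun C hC => ⟨?_, ?_⟩, fun k => ⟨?_, ?_⟩⟩
  · rintro ⟨u, c, hc, rfl⟩
    obtain ⟨w, c', hc', hedges⟩ := fwd hc
    exact ⟨w, c', hc', by ext; simp [hedges]⟩
  · rintro ⟨w, c', hc', himage⟩
    obtain ⟨u, c, hc, hedges⟩ := bwd hc'
    refine ⟨u, c, hc, ?_⟩
    rw [← hinv.1.image_image' hC, himage, hedges]
    ext; simp
  · rintro ⟨u, c, hc, rfl⟩
    obtain ⟨w, c', hc', hedges⟩ := fwd hc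
    exact ⟨w, c', hc', length_eq hedges⟩
  · rintro ⟨w, c', hc', rfl⟩
    obtain ⟨u, c, hc, hedges⟩ := bwd hc'
    exact ⟨u, c, hc, length_eq hedges⟩

/-- the edge map `phiB` of the Type B Whitney flip is a bijection from the
edge set of `G` onto the edge set of the flipped graph; a set `C` of edges of `G` is the
edge set of a cycle of `G` iff its image is the edge set of a cycle of the flipped graph;
in particular both graphs have cycles of exactly the same lengths. -/
theorem phiB_edge_bijection_cycles {V : Type*} [DecidableEq V] (G : SimpleGraph V)
    (v1 v2 : V) (hadj : G.Adj v1 v2)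
    (H : Set V) (h1 : v1 ∈ H) (hv2 : v2 ∉ H) (hHconn : (G.induce H).Connected)
    (hHedge : ∀ x y : V, G.Adj x y → x ∈ H \ ({v1} : Set V) → y ∈ H) :
    Set.BijOn (phiB v1 v2 H) G.edgeSet (typeBFlip G v1 v2 H hv2).edgeSet ∧
      (∀ C : Set (Sym2 V), C ⊆ G.edgeSet →
        ((∃ u : V, ∃ c : G.Walk u u, c.IsCycle ∧ C = {f | f ∈ c.edges}) ↔
          (∃ u : V, ∃ c : (typeBFlip G v1 v2 H hv2).Walk u u, c.IsCycle ∧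
            phiB v1 v2 H '' C = {f | f ∈ c.edges}))) ∧
      (∀ k : ℕ, (∃ u : V, ∃ c : G.Walk u u, c.IsCycle ∧ c.length = k) ↔
        (∃ u : V, ∃ c : (typeBFlip G v1 v2 H hv2).Walk u u, c.IsCycle ∧ c.length = k)) :=
  phiB_edge_bijection_cycles_general G v1 v2 H h1 hv2 hHedge
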